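/- Let σ, ρ ∈ (0,1) and 0 < c ≤ C. Suppose x_k ∈ 𝔹 is a sequence with F(x_k) ≠ 0 for all k, B_k : E → E are symmetric positive definite linear maps satisfying c ‖d‖² ≤ ⟪d, B_k d⟫ ≤ C ‖d‖² for all d ∈ E and all k, d_k := −B_k⁻¹ F(x_k), α_k := ρ^{j_k} where j_k is the smallest natural number j such that φ(x_k(ρ^j)) ≤ φ(x_k) − σ ρ^j ⟪F(x_k), B_k⁻¹ F(x_k)⟫ (here x_k(α) := (x_k + α d_k)/‖x_k + α d_k‖; such j_k exists), and x_{k+1} := x_k(α_k). Then every accumulation point x̄ of the sequence {x_k} satisfies F(x̄) = 0, i.e. x̄ is a Z-eigenvector of A corresponding to the eigenvalue λ̄ = A x̄^m. -/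

import Mathlib

open scoped RealInnerProductSpace

noncomputable section

/-- Euclidean space `ℝ^n`. -/
abbrev Euc (n : ℕ) : Type := EuclideanSpace ℝ (Fin n)

/-- An `m`-th order tensor on `ℝ^n`, viewed as a continuous `m`-multilinear form. -/
abbrev Tensor (m n : ℕ) : Type := ContinuousMultilinearMap ℝ (fun _ : Fin m => Euc n) ℝ

/-- A tensor is symmetric if it is invariant under every permutation of its arguments. -/
def IsSymmTensor {m n : ℕ} (A : Tensor m n) : Prop :=
  ∀ (e : Equiv.Perm (Fin m)) (v : Fin m → Euc n), A (v ∘ e) = A v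

/-- `A x^m`, the homogeneous form `A (x, …, x)`. -/
def tpow {m n : ℕ} (A : Tensor m n) (x : Euc n) : ℝ := A (fun _ => x)

/-- The last index of `Fin m`. -/
def lastIdx {m : ℕ} (_hm : 2 ≤ m) : Fin m := ⟨m - 1, by omega⟩

/-- The second to last index of `Fin m`. -/
def sndIdx {m : ℕ} (_hm : 2 ≤ m) : Fin m := ⟨m - 2, by omega⟩

lemma sndIdx_ne_lastIdx {m : ℕ} (hm : 2 ≤ m) : sndIdx hm ≠ lastIdx hm := by
  simp only [sndIdx, lastIdx, Fin.mk.injEq, ne_eq]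
  omega

/-- `A x^{m-1}`: the unique vector with `⟪A x^{m-1}, v⟫ = A (x, …, x, v)` for all `v`. -/
def tvec {m n : ℕ} (A : Tensor m n) (hm : 2 ≤ m) (x : Euc n) : Euc n :=
  (InnerProductSpace.toDual ℝ (Euc n)).symm
    (A.toContinuousLinearMap (fun _ => x) (lastIdx hm))

/-- `F(x) = A x^{m-1} - (A x^m) • x`. -/
def Fvec {m n : ℕ} (A : Tensor m n) (hm : 2 ≤ m) (x : Euc n) : Euc n :=
  tvec A hm x - tpow A x • x

/-- `φ(x) = (1/m) A x^m`. -/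
def phi {m n : ℕ} (A : Tensor m n) (x : Euc n) : ℝ := (1 / (m : ℝ)) * tpow A x

/-- Orthogonal projection `P_x d = d - ⟪x, d⟫ x` (for `x` a unit vector). -/
def Pproj {n : ℕ} (x d : Euc n) : Euc n := d - ⟪x, d⟫ • x

/-- `x(α) = (x + α d)/‖x + α d‖`, the projection of `x + α d` onto the unit sphere. -/
def xcur {n : ℕ} (x d : Euc n) (α : ℝ) : Euc n := ‖x + α • d‖⁻¹ • (x + α • d)

/-- `w(x, d)`: the unique vector with `⟪w(x, d), v⟫ = A (x, …, x, d, v)` for all `v`. -/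
def wvec {m n : ℕ} (A : Tensor m n) (hm : 2 ≤ m) (x d : Euc n) : Euc n :=
  (InnerProductSpace.toDual ℝ (Euc n)).symm
    (A.toContinuousLinearMap (Function.update (fun _ => x) (sndIdx hm) d) (lastIdx hm))

/-- `A (x, …, x, d, d)`. -/
def A2 {m n : ℕ} (A : Tensor m n) (hm : 2 ≤ m) (x d : Euc n) : ℝ :=
  A (Function.update (Function.update (fun _ => x) (sndIdx hm) d) (lastIdx hm) d)

lemma wvec_add {m n : ℕ} (A : Tensor m n) (hm : 2 ≤ m) (x d₁ d₂ : Euc n) :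
    wvec A hm x (d₁ + d₂) = wvec A hm x d₁ + wvec A hm x d₂ := by
  unfold wvec
  rw [← map_add]
  congr 1
  ext v
  simp only [ContinuousMultilinearMap.toContinuousLinearMap_apply, ContinuousLinearMap.add_apply]
  rw [Function.update_comm (sndIdx_ne_lastIdx hm), Function.update_comm (sndIdx_ne_lastIdx hm),
    Function.update_comm (sndIdx_ne_lastIdx hm)]
  exact A.map_update_add _ _ _ _

lemma wvec_smul {m n : ℕ} (A : Tensor m n) (hm : 2 ≤ m) (x : Euc n) (c : ℝ) (d : Euc n) :
    wvec A hm x (c • d) = c • wvec A hm x d := by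
  unfold wvec
  rw [← map_smul]
  congr 1
  ext v
  simp only [ContinuousMultilinearMap.toContinuousLinearMap_apply,
    ContinuousLinearMap.smul_apply, smul_eq_mul]
  rw [Function.update_comm (sndIdx_ne_lastIdx hm), Function.update_comm (sndIdx_ne_lastIdx hm)]
  exact A.map_update_smul _ _ _ _

/-- The Jacobian `F'(x) d = (m-1) w(x,d) - (A x^m) d - m ⟪A x^{m-1}, d⟫ x`. -/
def FderivL {m n : ℕ} (A : Tensor m n) (hm : 2 ≤ m) (x : Euc n) : Euc n →L[ℝ] Euc n :=
  LinearMap.toContinuousLinearMap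
  { toFun := fun d =>
      ((m : ℝ) - 1) • wvec A hm x d - tpow A x • d - ((m : ℝ) * ⟪tvec A hm x, d⟫) • x
    map_add' := by
      intro d₁ d₂
      try simp only
      rw [wvec_add, inner_add_right]
      module
    map_smul' := by
      intro c d
      simp only [RingHom.id_apply]
      rw [wvec_smul, inner_smul_right]
      module }

/-- A Newton direction at `x`: `⟪x, d⟫ = 0` and `P_x (F'(x) d + F(x)) = 0`. -/
def NewtonDir {m n : ℕ} (A : Tensor m n) (hm : 2 ≤ m) (x d : Euc n) : Prop :=
  ⟪x, d⟫ = 0 ∧ Pproj x (FderivL A hm x d + Fvec A hm x) = 0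

/-- The residual function `θ(x) = (1/2)‖F(x)‖²`. -/
def theta {m n : ℕ} (A : Tensor m n) (hm : 2 ≤ m) (x : Euc n) : ℝ :=
  (1 / 2) * ‖Fvec A hm x‖ ^ 2

/-- Assumption (A): second-order sufficient condition at the KKT point `x̄`. -/
def AssumpA {m n : ℕ} (A : Tensor m n) (hm : 2 ≤ m) (xb : Euc n) (lam : ℝ) : Prop :=
  ‖xb‖ = 1 ∧ tvec A hm xb = lam • xb ∧ lam = tpow A xb ∧
    ∀ d : Euc n, d ≠ 0 → ⟪xb, d⟫ = 0 →
      0 < ((m : ℝ) - 1) * A2 A hm xb d - lam * ‖d‖ ^ 2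

end

/-!
Along the iterates `φ` drops by at least `σ αₖ gₖ`, where
`gₖ = ⟪F(xₖ), Bₖ⁻¹ F(xₖ)⟫ = -⟪F(xₖ), dₖ⟫`, and `φ` is bounded below on the sphere, so
`αₖ gₖ → 0`. Suppose `F(x̄) ≠ 0` at a limit point. The bounds on `Bₖ` keep `dₖ` bounded, so
along a further subsequence `dₖ → d̄`, and they force `ḡ = -⟪F(x̄), d̄⟫ ≥ c ‖d̄‖² > 0`. Hence
`αₖ → 0`, and the Armijo test fails at the larger step `αₖ / ρ`. Since
`d/dτ φ(x(τ)) = ⟪F(x(τ)), d⟫ / ‖x + τ d‖`, the mean value theorem turns these failures into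
`-σ ḡ ≤ -ḡ` in the limit, contradicting `σ < 1`.
-/

open Filter Set Topology

lemma add_smul_ne_zero_of_norm_eq_one {E : Type*} [NormedAddCommGroup E] [NormedSpace ℝ E]
    {x d : E} {τ : ℝ} (hx : ‖x‖ = 1) (hτ : |τ| * ‖d‖ < 1) : x + τ • d ≠ 0 := by
  rw [← norm_pos_iff]
  have h := norm_sub_norm_le x (-(τ • d))
  rw [sub_neg_eq_add, norm_neg, norm_smul, Real.norm_eq_abs, hx] at h
  linarith

lemma exists_lt_deriv_of_add_mul_lt {f f' : ℝ → ℝ} {a β : ℝ} (hβ : 0 < β)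
    (hf : ∀ τ ∈ Icc 0 β, HasDerivAt f (f' τ) τ) (hlt : f 0 + a * β < f β) :
    ∃ ξ ∈ Ioo 0 β, a < f' ξ := by
  obtain ⟨ξ, hξ, hslope⟩ := exists_hasDerivAt_eq_slope f f' hβ
    (fun τ hτ => (hf τ hτ).continuousAt.continuousWithinAt)
    (fun τ hτ => hf τ (Ioo_subset_Icc_self hτ))
  refine ⟨ξ, hξ, ?_⟩
  rw [hslope, sub_zero, lt_div_iff₀ hβ]
  linarith

lemma tendsto_zero_of_le_sub_of_bddBelow {f a : ℕ → ℝ} (hf : BddBelow (range f))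
    (ha : ∀ k, 0 ≤ a k) (hdec : ∀ k, f (k + 1) ≤ f k - a k) : Tendsto a atTop (𝓝 0) := by
  have hanti : Antitone f := antitone_nat_of_succ_le fun k => by linarith [hdec k, ha k]
  have hlim := tendsto_atTop_ciInf hanti hf
  have hdiff : Tendsto (fun k => f k - f (k + 1)) atTop (𝓝 0) := by
    simpa using hlim.sub (hlim.comp (tendsto_add_atTop_nat 1))
  exact squeeze_zero ha (fun k => by linarith [hdec k]) hdiff

lemma tendsto_pow_sub_one_of_tendsto_pow {ρ : ℝ} (hρ : 0 < ρ) {j : ℕ → ℕ}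
    (h : Tendsto (fun i => ρ ^ j i) atTop (𝓝 0)) :
    Tendsto (fun i => ρ ^ (j i - 1)) atTop (𝓝 0) := by
  have hj0 : ∀ᶠ i in atTop, j i ≠ 0 :=
    (h.eventually_lt_const one_pos).mono fun i hi h0 => by simp [h0] at hi
  refine (zero_div ρ ▸ h.div_const ρ).congr' (hj0.mono fun i hi => ?_)
  show ρ ^ j i / ρ = ρ ^ (j i - 1)
  rw [pow_sub₀ _ hρ.ne' (Nat.one_le_iff_ne_zero.2 hi), pow_one, div_eq_mul_inv]

lemma mul_norm_le_of_mul_norm_sq_le_neg_inner {E : Type*} [NormedAddCommGroup E]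
    [InnerProductSpace ℝ E] {c : ℝ} {v w : E} (h : c * ‖w‖ ^ 2 ≤ -⟪v, w⟫) : c * ‖w‖ ≤ ‖v‖ := by
  rcases (norm_nonneg w).eq_or_lt with hw | hw
  · rw [← hw, mul_zero]
    exact norm_nonneg v
  · refine le_of_mul_le_mul_right ?_ hw
    calc c * ‖w‖ * ‖w‖ = c * ‖w‖ ^ 2 := by ring
      _ ≤ -⟪v, w⟫ := h
      _ ≤ ‖v‖ * ‖w‖ := (neg_le_abs _).trans (abs_real_inner_le_norm v w)

lemma IsSelfAdjoint.opNorm_le_of_inner_map_self_le {E : Type*} [NormedAddCommGroup E]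
    [InnerProductSpace ℝ E] [CompleteSpace E] {B : E →L[ℝ] E} (hB : IsSelfAdjoint B) {C : ℝ}
    (hC : 0 ≤ C) (h0 : ∀ v, 0 ≤ ⟪v, B v⟫) (hle : ∀ v, ⟪v, B v⟫ ≤ C * ‖v‖ ^ 2) : ‖B‖ ≤ C := by
  rw [B.norm_eq_iSup_rayleighQuotient hB.isSymmetric]
  refine ciSup_le fun v => ?_
  rw [ContinuousLinearMap.rayleighQuotient, ContinuousLinearMap.reApplyInnerSelf_apply,
    RCLike.re_to_real, real_inner_comm, abs_div, abs_of_nonneg (h0 v),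
    abs_of_nonneg (by positivity)]
  rcases eq_or_ne v 0 with rfl | hv
  · simpa using hC
  · rw [div_le_iff₀ (by positivity)]
    exact hle v

section Tensor

variable {m n : ℕ} (A : Tensor m n) (hm : 2 ≤ m)

lemma inner_tvec (x v : Euc n) :
    ⟪tvec A hm x, v⟫ = A (Function.update (fun _ => x) (lastIdx hm) v) := by
  rw [tvec, InnerProductSpace.toDual_symm_apply,
    ContinuousMultilinearMap.toContinuousLinearMap_apply]

lemma inner_tvec_self (x : Euc n) : ⟪tvec A hm x, x⟫ = tpow A x := by
  rw [inner_tvec, Function.update_eq_self, tpow]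

lemma inner_tvec_Pproj (x d : Euc n) : ⟪tvec A hm x, Pproj x d⟫ = ⟪Fvec A hm x, d⟫ := by
  rw [Pproj, Fvec, inner_sub_right, inner_sub_left, real_inner_smul_right, real_inner_smul_left,
    inner_tvec_self]
  ring

variable {A} in
lemma IsSymmTensor.apply_update (hA : IsSymmTensor A) (x v : Euc n) (i : Fin m) :
    A (Function.update (fun _ => x) i v) = ⟪tvec A hm x, v⟫ := by
  rw [inner_tvec, ← hA (Equiv.swap i (lastIdx hm)), Function.update_comp_equiv]
  simp [Equiv.swap_apply_left, Function.comp_def]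

variable {A} in
lemma HasDerivAt.tpow (hA : IsSymmTensor A) {γ : ℝ → Euc n} {γ' : Euc n} {t : ℝ}
    (hγ : HasDerivAt γ γ' t) :
    HasDerivAt (fun τ => tpow A (γ τ)) (m * ⟪tvec A hm (γ t), γ'⟫) t := by
  have h := (A.hasFDerivAt fun _ => γ t).comp_hasDerivAt t
    (hasDerivAt_pi.mpr fun _ : Fin m => hγ)
  simpa [ContinuousMultilinearMap.linearDeriv_apply, hA.apply_update hm, Function.comp_def,
    _root_.tpow] using h

lemma continuous_tpow : Continuous (tpow A) :=
  A.cont.comp (continuous_pi fun _ => continuous_id)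

lemma continuous_tvec : Continuous (tvec A hm) :=
  (InnerProductSpace.toDual ℝ (Euc n)).symm.continuous.comp <|
    continuous_clm_apply.mpr fun _ =>
      A.cont.comp ((continuous_pi fun _ => continuous_id).update _ continuous_const)

lemma continuous_Fvec : Continuous (Fvec A hm) :=
  (continuous_tvec A hm).sub ((continuous_tpow A).smul continuous_id)

end Tensor

section Sphere

variable {m n : ℕ}

lemma xcur_zero {x : Euc n} (d : Euc n) (hx : ‖x‖ = 1) : xcur x d 0 = x := by
  simp [xcur, hx]

lemma hasDerivAt_xcur (x d : Euc n) {t : ℝ} (h : x + t • d ≠ 0) :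
    HasDerivAt (xcur x d) (‖x + t • d‖⁻¹ • Pproj (xcur x d t) d) t := by
  have hline : HasDerivAt (fun τ : ℝ => x + τ • d) d t := by
    simpa using ((hasDerivAt_id t).smul_const d).const_add x
  have hN : 0 < ‖x + t • d‖ := norm_pos_iff.mpr h
  have hnorm : HasDerivAt (fun τ => ‖x + τ • d‖) (⟪x + t • d, d⟫ / ‖x + t • d‖) t := by
    have h2 := hline.norm_sq.sqrt (by positivity)
    simp only [Real.sqrt_sq (norm_nonneg _)] at h2
    convert h2 using 1
    field_simp
  refine ((hnorm.inv hN.ne').smul hline).congr_deriv ?_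
  rw [Pproj, xcur, real_inner_smul_left]
  module

variable (A : Tensor m n) (hm : 2 ≤ m)

variable {A} in
lemma hasDerivAt_phi_xcur (hA : IsSymmTensor A) (x d : Euc n) {t : ℝ} (h : x + t • d ≠ 0) :
    HasDerivAt (fun τ => phi A (xcur x d τ))
      (‖x + t • d‖⁻¹ * ⟪Fvec A hm (xcur x d t), d⟫) t := by
  have hm0 : (m : ℝ) ≠ 0 := by positivity
  refine (((hasDerivAt_xcur x d h).tpow hm hA).const_mul (1 / (m : ℝ))).congr_deriv ?_
  rw [real_inner_smul_right, inner_tvec_Pproj]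
  field_simp

lemma bddBelow_phi_sphere : BddBelow (phi A '' Metric.sphere 0 1) :=
  (isCompact_sphere 0 1).bddBelow_image (continuous_const.mul (continuous_tpow A)).continuousOn

end Sphere

section Armijo

variable {m n : ℕ} {A : Tensor m n} (hm : 2 ≤ m)

theorem le_inner_Fvec_of_armijo_fails (hA : IsSymmTensor A) {σ : ℝ} {y e : ℕ → Euc n}
    {β : ℕ → ℝ} {xb db : Euc n} (hy1 : ∀ i, ‖y i‖ = 1) (hy : Tendsto y atTop (𝓝 xb))
    (he : Tendsto e atTop (𝓝 db)) (hβ0 : ∀ i, 0 < β i) (hβ : Tendsto β atTop (𝓝 0))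
    (hfail : ∀ᶠ i in atTop,
      phi A (y i) + σ * ⟪Fvec A hm (y i), e i⟫ * β i < phi A (xcur (y i) (e i) (β i))) :
    σ * ⟪Fvec A hm xb, db⟫ ≤ ⟪Fvec A hm xb, db⟫ := by
  have hxb : ‖xb‖ = 1 :=
    tendsto_nhds_unique (f := fun i => ‖y i‖) (by simp only [hy1]; exact tendsto_const_nhds)
      hy.norm |>.symm
  have hsmall : ∀ᶠ i in atTop, β i * ‖e i‖ < 1 := by
    have h : Tendsto (fun i => β i * ‖e i‖) atTop (𝓝 0) := by simpa using hβ.mul he.norm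
    exact h.eventually_lt_const one_pos
  have hmvt : ∀ᶠ i in atTop, ∃ ξ, ξ ∈ Ioo 0 (β i) ∧ σ * ⟪Fvec A hm (y i), e i⟫ <
      ‖y i + ξ • e i‖⁻¹ * ⟪Fvec A hm (xcur (y i) (e i) ξ), e i⟫ := by
    filter_upwards [hfail, hsmall] with i hfail hsmall
    have hne : ∀ τ ∈ Icc 0 (β i), y i + τ • e i ≠ 0 := fun τ hτ =>
      add_smul_ne_zero_of_norm_eq_one (hy1 i) (by
        rw [abs_of_nonneg hτ.1]; nlinarith [norm_nonneg (e i), hτ.2])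
    exact exists_lt_deriv_of_add_mul_lt (f := fun τ => phi A (xcur (y i) (e i) τ)) (hβ0 i)
      (fun τ hτ => hasDerivAt_phi_xcur hm hA _ _ (hne τ hτ))
      (by simpa only [xcur_zero _ (hy1 i)] using hfail)
  obtain ⟨ξ, hξ⟩ := hmvt.choice
  have hξ0 : Tendsto ξ atTop (𝓝 0) :=
    squeeze_zero' (hξ.mono fun _ h => h.1.1.le) (hξ.mono fun _ h => h.1.2.le) hβ
  have hpt : Tendsto (fun i => y i + ξ i • e i) atTop (𝓝 xb) := by
    simpa using hy.add (hξ0.smul he)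
  have hinv : Tendsto (fun i => ‖y i + ξ i • e i‖⁻¹) atTop (𝓝 1) := by
    simpa [hxb] using hpt.norm.inv₀ (by simp [hxb])
  have hxcur : Tendsto (fun i => xcur (y i) (e i) (ξ i)) atTop (𝓝 xb) := by
    simpa only [xcur, one_smul] using hinv.smul hpt
  have hF := (continuous_Fvec A hm).tendsto xb
  exact le_of_tendsto_of_tendsto (((hF.comp hy).inner he).const_mul σ)
    (by simpa using hinv.mul ((hF.comp hxcur).inner he)) (hξ.mono fun _ h => h.2.le)

variable {σ ρ : ℝ} {x d : ℕ → Euc n} {g : ℕ → ℝ} {j : ℕ → ℕ}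

lemma tendsto_armijo_step_mul (hσ : 0 < σ) (hρ : 0 < ρ) (hx1 : ∀ k, ‖x k‖ = 1)
    (hg0 : ∀ k, 0 ≤ g k)
    (hj : ∀ k, phi A (xcur (x k) (d k) (ρ ^ j k)) ≤ phi A (x k) - σ * ρ ^ j k * g k)
    (hstep : ∀ k, x (k + 1) = xcur (x k) (d k) (ρ ^ j k)) :
    Tendsto (fun k => ρ ^ j k * g k) atTop (𝓝 0) := by
  have hbdd : BddBelow (range fun k => phi A (x k)) :=
    (bddBelow_phi_sphere A).mono <| range_subset_iff.2 fun k =>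
      mem_image_of_mem _ (mem_sphere_zero_iff_norm.2 (hx1 k))
  have h := tendsto_zero_of_le_sub_of_bddBelow hbdd (a := fun k => σ * (ρ ^ j k * g k))
    (fun k => mul_nonneg hσ.le (mul_nonneg (pow_nonneg hρ.le _) (hg0 k)))
    (fun k => by rw [hstep]; linarith [hj k])
  simpa [hσ.ne'] using h.const_mul σ⁻¹

theorem Fvec_eq_zero_of_armijo (hA : IsSymmTensor A) {c C : ℝ} (hσ : σ ∈ Ioo 0 1) (hρ : 0 < ρ)
    (hc : 0 < c) (hx1 : ∀ k, ‖x k‖ = 1) (hg : ∀ k, g k = -⟪Fvec A hm (x k), d k⟫)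
    (hgd : ∀ k, c * ‖d k‖ ^ 2 ≤ g k) (hFd : ∀ k, ‖Fvec A hm (x k)‖ ≤ C * ‖d k‖)
    (hj : ∀ k, phi A (xcur (x k) (d k) (ρ ^ j k)) ≤ phi A (x k) - σ * ρ ^ j k * g k)
    (hjmin : ∀ k, ∀ i < j k,
      ¬ phi A (xcur (x k) (d k) (ρ ^ i)) ≤ phi A (x k) - σ * ρ ^ i * g k)
    (hstep : ∀ k, x (k + 1) = xcur (x k) (d k) (ρ ^ j k))
    {s : ℕ → ℕ} (hs : StrictMono s) {xb : Euc n} (hxs : Tendsto (x ∘ s) atTop (𝓝 xb)) :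
    Fvec A hm xb = 0 := by
  by_contra hF
  have hF_cont := (continuous_Fvec A hm).tendsto xb
  have hg0 : ∀ k, 0 ≤ g k := fun k => (mul_nonneg hc.le (sq_nonneg _)).trans (hgd k)
  have hdF : ∀ k, c * ‖d k‖ ≤ ‖Fvec A hm (x k)‖ := fun k =>
    mul_norm_le_of_mul_norm_sq_le_neg_inner ((hgd k).trans (hg k).le)
  obtain ⟨R, hR⟩ := ((hF_cont.comp hxs).norm.div_const c).bddAbove_range
  obtain ⟨db, -, t, ht, hdt⟩ := tendsto_subseq_of_bounded (Metric.isBounded_closedBall (r := R))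
    fun i => mem_closedBall_zero_iff.2 (((le_div_iff₀' hc).2 (hdF (s i))).trans (hR ⟨i, rfl⟩))
  set u := s ∘ t
  have hu : Tendsto u atTop atTop := (hs.comp ht).tendsto_atTop
  have hxu : Tendsto (x ∘ u) atTop (𝓝 xb) := hxs.comp ht.tendsto_atTop
  have hdu : Tendsto (d ∘ u) atTop (𝓝 db) := hdt
  have hgu : Tendsto (g ∘ u) atTop (𝓝 (-⟪Fvec A hm xb, db⟫)) := by
    simpa only [Function.comp_def, hg] using ((hF_cont.comp hxu).inner hdu).neg
  have hgb : 0 < -⟪Fvec A hm xb, db⟫ := by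
    have hdb : ‖Fvec A hm xb‖ ≤ C * ‖db‖ :=
      le_of_tendsto_of_tendsto' (hF_cont.comp hxu).norm (hdu.norm.const_mul C) fun i => hFd (u i)
    have hdb0 : db ≠ 0 := by
      rintro rfl
      exact hF (norm_le_zero_iff.1 (by simpa using hdb))
    calc 0 < c * ‖db‖ ^ 2 := by positivity
      _ ≤ _ := le_of_tendsto_of_tendsto' ((hdu.norm.pow 2).const_mul c) hgu fun i => hgd (u i)
  have hα : Tendsto (fun i => ρ ^ j (u i)) atTop (𝓝 0) := by
    have h := ((tendsto_armijo_step_mul hσ.1 hρ hx1 hg0 hj hstep).comp hu).div hgu hgb.ne'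
    rw [zero_div] at h
    refine h.congr' ((hgu.eventually_ne hgb.ne').mono fun i hi => ?_)
    simp only [Pi.div_apply, Function.comp_apply] at hi ⊢
    field_simp
  have hj0 : ∀ᶠ i in atTop, j (u i) ≠ 0 :=
    (hα.eventually_lt_const one_pos).mono fun i hi h0 => by simp [h0] at hi
  have hfail : ∀ᶠ i in atTop, phi A (x (u i)) + σ * ⟪Fvec A hm (x (u i)), d (u i)⟫ *
      ρ ^ (j (u i) - 1) < phi A (xcur (x (u i)) (d (u i)) (ρ ^ (j (u i) - 1))) :=
    hj0.mono fun i hi => by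
      have h := hjmin (u i) (j (u i) - 1) (by omega)
      rw [hg, not_le] at h
      linarith
  have hlim := le_inner_Fvec_of_armijo_fails hm hA (fun i => hx1 (u i)) hxu hdu
    (fun i => pow_pos hρ _) (tendsto_pow_sub_one_of_tendsto_pow hρ hα) hfail
  nlinarith [hσ.2]

end Armijo

theorem stmt4_general {m n : ℕ} (hm : 2 ≤ m) (A : Tensor m n) (hA : IsSymmTensor A)
    (σ ρ : ℝ) (hσ : σ ∈ Set.Ioo (0 : ℝ) 1) (hρ : ρ ∈ Set.Ioo (0 : ℝ) 1)
    (c C : ℝ) (hc : 0 < c) (hcC : c ≤ C)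
    (x : ℕ → Euc n) (hxS : ∀ k, ‖x k‖ = 1)
    (B Binv : ℕ → Euc n →L[ℝ] Euc n)
    (hBsa : ∀ k, IsSelfAdjoint (B k))
    (hBlow : ∀ k (v : Euc n), c * ‖v‖ ^ 2 ≤ ⟪v, B k v⟫)
    (hBup : ∀ k (v : Euc n), ⟪v, B k v⟫ ≤ C * ‖v‖ ^ 2)
    (hBinv : ∀ k v, B k (Binv k v) = v)
    (d : ℕ → Euc n) (hd : ∀ k, d k = -(Binv k (Fvec A hm (x k))))
    (j : ℕ → ℕ)
    (hj : ∀ k, phi A (xcur (x k) (d k) (ρ ^ j k)) ≤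
        phi A (x k) - σ * ρ ^ j k * ⟪Fvec A hm (x k), Binv k (Fvec A hm (x k))⟫)
    (hjmin : ∀ k, ∀ i < j k, ¬ (phi A (xcur (x k) (d k) (ρ ^ i)) ≤
        phi A (x k) - σ * ρ ^ i * ⟪Fvec A hm (x k), Binv k (Fvec A hm (x k))⟫))
    (hstep : ∀ k, x (k + 1) = xcur (x k) (d k) (ρ ^ j k)) :
    ∀ xb : Euc n,
      (∃ s : ℕ → ℕ, StrictMono s ∧
        Filter.Tendsto (fun i => x (s i)) Filter.atTop (nhds xb)) →
      Fvec A hm xb = 0 ∧ tvec A hm xb = tpow A xb • xb := by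
  rintro xb ⟨s, hs, hxs⟩
  have hBd : ∀ k, B k (d k) = -Fvec A hm (x k) := fun k => by rw [hd, map_neg, hBinv]
  have hg : ∀ k, ⟪Fvec A hm (x k), Binv k (Fvec A hm (x k))⟫ = -⟪Fvec A hm (x k), d k⟫ :=
    fun k => by rw [hd, inner_neg_right, neg_neg]
  have hgd : ∀ k, c * ‖d k‖ ^ 2 ≤ ⟪Fvec A hm (x k), Binv k (Fvec A hm (x k))⟫ := fun k => by
    simpa [hBd, hg, real_inner_comm] using hBlow k (d k)
  have hFd : ∀ k, ‖Fvec A hm (x k)‖ ≤ C * ‖d k‖ := fun k => by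
    have hBC := (hBsa k).opNorm_le_of_inner_map_self_le (hc.le.trans hcC)
      (fun v => (by positivity : 0 ≤ c * ‖v‖ ^ 2).trans (hBlow k v)) (hBup k)
    simpa [hBd] using ((B k).le_opNorm (d k)).trans (by gcongr)
  have hF := Fvec_eq_zero_of_armijo hm hA hσ hρ.1 hc hxS hg hgd hFd hj hjmin hstep hs hxs
  exact ⟨hF, sub_eq_zero.1 hF⟩

/-- global convergence of the general feasible descent method: every accumulation
point of the iterates is a `Z`-eigenvector of `A` with eigenvalue `A x̄^m`. -/
theorem stmt4 {m n : ℕ} (hn : 1 ≤ n) (hm : 2 ≤ m) (A : Tensor m n) (hA : IsSymmTensor A)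
    (σ ρ : ℝ) (hσ : σ ∈ Set.Ioo (0 : ℝ) 1) (hρ : ρ ∈ Set.Ioo (0 : ℝ) 1)
    (c C : ℝ) (hc : 0 < c) (hcC : c ≤ C)
    (x : ℕ → Euc n) (hxS : ∀ k, ‖x k‖ = 1) (hFk : ∀ k, Fvec A hm (x k) ≠ 0)
    (B Binv : ℕ → Euc n →L[ℝ] Euc n)
    (hBsa : ∀ k, IsSelfAdjoint (B k))
    (hBlow : ∀ k (v : Euc n), c * ‖v‖ ^ 2 ≤ ⟪v, B k v⟫)
    (hBup : ∀ k (v : Euc n), ⟪v, B k v⟫ ≤ C * ‖v‖ ^ 2)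
    (hBinv : ∀ k v, B k (Binv k v) = v) (hBinv' : ∀ k v, Binv k (B k v) = v)
    (d : ℕ → Euc n) (hd : ∀ k, d k = -(Binv k (Fvec A hm (x k))))
    (j : ℕ → ℕ)
    (hj : ∀ k, phi A (xcur (x k) (d k) (ρ ^ j k)) ≤
        phi A (x k) - σ * ρ ^ j k * ⟪Fvec A hm (x k), Binv k (Fvec A hm (x k))⟫)
    (hjmin : ∀ k, ∀ i < j k, ¬ (phi A (xcur (x k) (d k) (ρ ^ i)) ≤
        phi A (x k) - σ * ρ ^ i * ⟪Fvec A hm (x k), Binv k (Fvec A hm (x k))⟫))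
    (hstep : ∀ k, x (k + 1) = xcur (x k) (d k) (ρ ^ j k)) :
    ∀ xb : Euc n,
      (∃ s : ℕ → ℕ, StrictMono s ∧
        Filter.Tendsto (fun i => x (s i)) Filter.atTop (nhds xb)) →
      Fvec A hm xb = 0 ∧ tvec A hm xb = tpow A xb • xb :=
  stmt4_general hm A hA σ ρ hσ hρ c C hc hcC x hxS B Binv hBsa hBlow hBup hBinv d hd j hj hjmin
    hstep
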